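/- arXiv:math/0204135 — 10 statements merged into one kernel-verified Lean document; each statement's English description precedes it below -/
import Mathlib

section
/- A linearly ordered field that is not Dedekind complete is totally disconnected in its order topology. -/
/-!
A gap `C` (a downward-closed set without supremum) has no greatest element and its complement
has no least element, so `C` is clopen. Affine maps `x ↦ k * x + m` with `k > 0` are order
automorphisms, hence homeomorphisms, and can move any pair `a < b` onto a pair `c ∈ C`, `u ∉ C`;
pulling `C` back gives a clopen set containing `a` but not `b`. So the field is totally separated.
-/

open Set

theorem IsLowerSet.isClopen_of_not_exists_isLUB {α : Type*} [LinearOrder α] [TopologicalSpace α]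
    [OrderTopology α] {C : Set α} (hC : IsLowerSet C) (hlub : ¬∃ l, IsLUB C l) : IsClopen C := by
  refine ⟨isOpen_compl_iff.mp <| isOpen_iff_mem_nhds.mpr fun y hy => ?_,
    isOpen_iff_mem_nhds.mpr fun x hx => ?_⟩
  · have hy_ub : y ∈ upperBounds C := fun c hc => le_of_not_gt fun hyc => hy (hC hyc.le hc)
    obtain ⟨z, hz_ub, hzy⟩ : ∃ z ∈ upperBounds C, z < y := by
      by_contra! h
      exact hlub ⟨y, hy_ub, h⟩
    exact Filter.mem_of_superset (Ioi_mem_nhds hzy) fun w hzw hw => (hz_ub hw).not_gt hzw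
  · obtain ⟨c, hc, hxc⟩ : ∃ c ∈ C, x < c := by
      by_contra! h
      exact hlub ⟨x, IsGreatest.isLUB ⟨hx, h⟩⟩
    exact Filter.mem_of_superset (Iio_mem_nhds hxc) fun w hw => hC hw.le hc

section LinearOrderedField

variable {F : Type*} [Field F] [LinearOrder F] [IsStrictOrderedRing F]

theorem exists_orderIso_apply_eq_of_lt {a b c d : F} (hab : a < b) (hcd : c < d) :
    ∃ e : F ≃o F, e a = c ∧ e b = d := by
  have hk : 0 < (d - c) / (b - a) := div_pos (sub_pos.mpr hcd) (sub_pos.mpr hab)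
  refine ⟨((OrderIso.addRight (-a)).trans (OrderIso.mulLeft₀ _ hk)).trans (OrderIso.addRight c),
    ?_, ?_⟩
  · simp
  · simp [← sub_eq_add_neg, div_mul_cancel₀ _ (sub_ne_zero.mpr hab.ne')]

variable [TopologicalSpace F] [OrderTopology F]

theorem exists_isClopen_mem_notMem_of_lt {C : Set F} (hne : C.Nonempty) (hnu : C ≠ univ)
    (hC : IsLowerSet C) (hlub : ¬∃ l, IsLUB C l) {a b : F} (hab : a < b) :
    ∃ U : Set F, IsClopen U ∧ a ∈ U ∧ b ∉ U := by
  obtain ⟨c, hc⟩ := hne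
  obtain ⟨u, hu⟩ := (ne_univ_iff_exists_notMem C).mp hnu
  have hcu : c < u := lt_of_not_ge fun huc => hu (hC huc hc)
  obtain ⟨e, hea, heb⟩ := exists_orderIso_apply_eq_of_lt hab hcu
  exact ⟨e ⁻¹' C, (hC.isClopen_of_not_exists_isLUB hlub).preimage e.continuous,
    by simpa [hea], by simpa [heb]⟩

theorem totallySeparatedSpace_of_isLowerSet_not_exists_isLUB {C : Set F} (hne : C.Nonempty)
    (hnu : C ≠ univ) (hC : IsLowerSet C) (hlub : ¬∃ l, IsLUB C l) : TotallySeparatedSpace F := by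
  refine totallySeparatedSpace_iff_exists_isClopen.mpr fun a b hab => ?_
  rcases hab.lt_or_gt with hab | hba
  · exact exists_isClopen_mem_notMem_of_lt hne hnu hC hlub hab
  · obtain ⟨U, hU, hb, ha⟩ := exists_isClopen_mem_notMem_of_lt hne hnu hC hlub hba
    exact ⟨Uᶜ, hU.compl, ha, by simpa using hb⟩

end LinearOrderedField

/-- A linearly ordered field that is not Dedekind complete is totally
disconnected in its order topology. -/
theorem dedekind_incomplete_totallyDisconnected (F : Type*) [Field F] [LinearOrder F] [IsStrictOrderedRing F]
    [TopologicalSpace F] [OrderTopology F]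
    (hinc : ∃ C : Set F, C.Nonempty ∧ C ≠ Set.univ ∧
      (∀ x ∈ C, ∀ y : F, y ≤ x → y ∈ C) ∧ ¬∃ l, IsLUB C l) :
    TotallyDisconnectedSpace F := by
  obtain ⟨C, hne, hnu, hdown, hlub⟩ := hinc
  have : TotallySeparatedSpace F :=
    totallySeparatedSpace_of_isLowerSet_not_exists_isLUB hne hnu
      (fun _ _ hyx hx => hdown _ hx _ hyx) hlub
  infer_instance
end

section
/- In a linearly ordered field that is not Dedekind complete, there exists a continuous function from the field to itself that does not satisfy the intermediate value property: there exist points a < b and a value y strictly between f(a) and f(b) such that y is not attained by f on [a,b]. -/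
/-! A lower set without a least upper bound has neither a greatest element nor a least strict upper
bound, so both it and its complement are open in the order topology. Such a cut `C` is therefore a
proper nonempty clopen set, and the indicator function of `C` is continuous but takes only the
values `0` and `1`, skipping `1 / 2`. -/

section

variable {α : Type*} [LinearOrder α] [TopologicalSpace α] [OrderTopology α] {s : Set α}

theorem IsLowerSet.isOpen_of_forall_exists_gt (hs : IsLowerSet s) (h : ∀ x ∈ s, ∃ y ∈ s, x < y) :
    IsOpen s :=
  isOpen_iff_mem_nhds.2 fun x hx =>
    let ⟨_, hy, hxy⟩ := h x hx
    Filter.mem_of_superset (Iio_mem_nhds hxy) fun _ hz => hs hz.le hy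

theorem IsUpperSet.isOpen_of_forall_exists_lt (hs : IsUpperSet s) (h : ∀ x ∈ s, ∃ y ∈ s, y < x) :
    IsOpen s :=
  isOpen_iff_mem_nhds.2 fun x hx =>
    let ⟨_, hy, hyx⟩ := h x hx
    Filter.mem_of_superset (Ioi_mem_nhds hyx) fun _ hz => hs hz.le hy

theorem IsLowerSet.isClopen_of_not_exists_isLUB_s2 (hs : IsLowerSet s) (h : ¬∃ l, IsLUB s l) :
    IsClopen s := by
  have not_isGreatest : ∀ x, ¬IsGreatest s x := fun x hx => h ⟨x, hx.isLUB⟩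
  refine ⟨isOpen_compl_iff.1 <| hs.compl.isOpen_of_forall_exists_lt fun x hx => ?_,
    hs.isOpen_of_forall_exists_gt fun x hx => ?_⟩
  · have hx_ub : x ∈ upperBounds s := fun c hc => le_of_not_ge fun hxc => hx (hs hxc hc)
    obtain ⟨u, hu_ub, hux⟩ : ∃ u ∈ upperBounds s, u < x := by
      by_contra! hleast
      exact h ⟨x, hx_ub, hleast⟩
    exact ⟨u, fun hu => not_isGreatest u ⟨hu, hu_ub⟩, hux⟩
  · by_contra! hmax
    exact not_isGreatest x ⟨hx, hmax⟩

end

/-- In a linearly ordered field that is not Dedekind complete, there is a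
continuous function failing the intermediate value property. -/
theorem dedekind_incomplete_no_IVT (F : Type*) [Field F] [LinearOrder F] [IsStrictOrderedRing F]
    [TopologicalSpace F] [OrderTopology F]
    (hinc : ∃ C : Set F, C.Nonempty ∧ C ≠ Set.univ ∧
      (∀ x ∈ C, ∀ y : F, y ≤ x → y ∈ C) ∧ ¬∃ l, IsLUB C l) :
    ∃ f : F → F, Continuous f ∧ ∃ a b y : F, a < b ∧
      y ∈ Set.Ioo (min (f a) (f b)) (max (f a) (f b)) ∧
      ∀ x ∈ Set.Icc a b, f x ≠ y := by
  obtain ⟨C, ⟨a, ha⟩, hC_ne_univ, hC_lower, hC_no_lub⟩ := hinc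
  obtain ⟨b, hb⟩ := (Set.ne_univ_iff_exists_notMem C).1 hC_ne_univ
  have hC : IsLowerSet C := fun x y hyx hx => hC_lower x hx y hyx
  have hab : a < b := lt_of_not_ge fun hba => hb (hC hba ha)
  refine ⟨C.indicator 1,
    (hC.isClopen_of_not_exists_isLUB_s2 hC_no_lub).continuous_indicator continuous_const,
    a, b, 1 / 2, hab, ?_, fun x _ => ?_⟩
  · simp only [Set.indicator_of_mem ha, Set.indicator_of_notMem hb, Pi.one_apply]
    norm_num
  · by_cases hx : x ∈ C <;> simp [hx]
end

section
/- If a linearly ordered field is Dedekind complete, then every continuous injective function defined on a closed bounded interval [a,b] maps every interior point of [a,b] to an interior point of the image f([a,b]). -/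
/-!
Dedekind completeness makes `F` a conditionally complete linear order, so the intermediate value
theorem holds on `[a, b]`. A continuous injective map on `[a, b]` is then strictly monotone or
strictly antitone, so an interior point `c` has `f c` strictly between `f a` and `f b`; the open
interval between `f a` and `f b` lies in `f '' [a, b]` by the intermediate value theorem.
-/

open Set

theorem exists_isGLB_of_exists_isLUB {α : Type*} [Preorder α]
    (h : ∀ s : Set α, s.Nonempty → BddAbove s → ∃ l, IsLUB s l) {s : Set α}
    (hne : s.Nonempty) (hbdd : BddBelow s) : ∃ l, IsGLB s l :=
  (h _ hbdd hne.bddAbove_lowerBounds).imp fun _ => isLUB_lowerBounds.mp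

open Classical in
noncomputable abbrev ConditionallyCompleteLinearOrder.ofExistsIsLUB (α : Type*) [LinearOrder α]
    [Nonempty α] (h : ∀ s : Set α, s.Nonempty → BddAbove s → ∃ l, IsLUB s l) :
    ConditionallyCompleteLinearOrder α where
  __ := ‹LinearOrder α›
  __ := LinearOrder.toLattice
  sSup s := if hs : s.Nonempty ∧ BddAbove s then (h s hs.1 hs.2).choose else Classical.arbitrary α
  sInf s := if hs : s.Nonempty ∧ BddBelow s then
    (exists_isGLB_of_exists_isLUB h hs.1 hs.2).choose else Classical.arbitrary α
  isLUB_csSup s hne hbdd := by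
    simp only [dif_pos (And.intro hne hbdd)]
    exact (h s hne hbdd).choose_spec
  isGLB_csInf s hne hbdd := by
    simp only [dif_pos (And.intro hne hbdd)]
    exact (exists_isGLB_of_exists_isLUB h hne hbdd).choose_spec
  csSup_of_not_bddAbove s hs := by simp [hs]
  csInf_of_not_bddBelow s hs := by simp [hs]

section IntermediateValue

variable {α δ : Type*} [ConditionallyCompleteLinearOrder α] [TopologicalSpace α] [OrderTopology α]
  [DenselyOrdered α] [LinearOrder δ] [TopologicalSpace δ] [OrderTopology δ] {a b : α} {f : α → δ}

theorem ContinuousOn.Ioo_subset_interior_image_Icc (hab : a ≤ b) (hf : ContinuousOn f (Icc a b)) :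
    Ioo (f a) (f b) ⊆ interior (f '' Icc a b) :=
  interior_maximal ((intermediate_value_Ioo hab hf).trans (image_mono Ioo_subset_Icc_self))
    isOpen_Ioo

theorem ContinuousOn.Ioo_subset_interior_image_Icc' (hab : a ≤ b)
    (hf : ContinuousOn f (Icc a b)) : Ioo (f b) (f a) ⊆ interior (f '' Icc a b) :=
  interior_maximal ((intermediate_value_Ioo' hab hf).trans (image_mono Ioo_subset_Icc_self))
    isOpen_Ioo

theorem ContinuousOn.mapsTo_Ioo_interior_image_Icc (hf : ContinuousOn f (Icc a b))
    (hinj : InjOn f (Icc a b)) : MapsTo f (Ioo a b) (interior (f '' Icc a b)) := by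
  rintro c ⟨hac, hcb⟩
  have hab : a ≤ b := (hac.trans hcb).le
  have ha : a ∈ Icc a b := left_mem_Icc.2 hab
  have hb : b ∈ Icc a b := right_mem_Icc.2 hab
  have hc : c ∈ Icc a b := ⟨hac.le, hcb.le⟩
  rcases hf.strictMonoOn_of_injOn_Icc' hab hinj with hmono | hanti
  · exact hf.Ioo_subset_interior_image_Icc hab ⟨hmono ha hc hac, hmono hc hb hcb⟩
  · exact hf.Ioo_subset_interior_image_Icc' hab ⟨hanti hc hb hcb, hanti ha hc hac⟩

end IntermediateValue

theorem dedekind_complete_interior_to_interior_general (F : Type*) [Field F] [LinearOrder F] [IsStrictOrderedRing F]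
    [TopologicalSpace F] [OrderTopology F]
    (hcomp : ∀ S : Set F, S.Nonempty → BddAbove S → ∃ l, IsLUB S l)
    (a b : F) (f : F → F)
    (hf : ContinuousOn f (Set.Icc a b)) (hinj : Set.InjOn f (Set.Icc a b)) :
    ∀ c ∈ interior (Set.Icc a b), f c ∈ interior (f '' Set.Icc a b) := by
  let _ := ConditionallyCompleteLinearOrder.ofExistsIsLUB F hcomp
  rw [interior_Icc]
  exact hf.mapsTo_Ioo_interior_image_Icc hinj

/-- In a Dedekind complete linearly ordered field, every continuous injective
function on `[a,b]` maps interior points of `[a,b]` to interior points of the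
image `f '' [a,b]`. -/
theorem dedekind_complete_interior_to_interior (F : Type*) [Field F] [LinearOrder F] [IsStrictOrderedRing F]
    [TopologicalSpace F] [OrderTopology F]
    (hcomp : ∀ S : Set F, S.Nonempty → BddAbove S → ∃ l, IsLUB S l)
    (a b : F) (hab : a < b) (f : F → F)
    (hf : ContinuousOn f (Set.Icc a b)) (hinj : Set.InjOn f (Set.Icc a b)) :
    ∀ c ∈ interior (Set.Icc a b), f c ∈ interior (f '' Set.Icc a b) :=
  dedekind_complete_interior_to_interior_general F hcomp a b f hf hinj
end

section
/- If an ordered field F has a regular gap, then for any a < b in F there is a regular gap C of F with a ∈ C and b ∉ C; explicitly, any regular gap of F can be additively translated to a regular gap lying strictly between a and b. -/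
/-!
Regularity applied with `ε = b - a` gives `c ∈ U` with `c + (b - a) ∉ U`. Translating `U` so that
`c` moves to `a` puts `a` inside and `b` outside, and translation by a constant is an order
automorphism commuting with every other translation, so it preserves being a downward-closed set
without supremum and being regular.
-/

open Set

theorem image_add_const_subset_self_preimage_add_const_iff {α : Type*} [AddCommGroup α]
    (U : Set α) (t ε : α) :
    (· + ε) '' ((· + t) ⁻¹' U) ⊆ (· + t) ⁻¹' U ↔ (· + ε) '' U ⊆ U := by
  simp only [image_subset_iff, preimage_preimage]
  constructor
  · intro h x hx
    simpa [add_right_comm] using @h (x - t) (by simpa using hx)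
  · intro h x hx
    simpa [add_right_comm] using h hx

theorem regular_gap_translate_general (F : Type*) [Field F] [LinearOrder F] [IsStrictOrderedRing F]
    (U : Set F)
    (hUdc : ∀ x ∈ U, ∀ y : F, y ≤ x → y ∈ U)
    (hUgap : ¬∃ l, IsLUB U l)
    (hUreg : ∀ ε : F, 0 < ε → ¬(Set.image (fun c => c + ε) U) ⊆ U)
    (a b : F) (hab : a < b) :
    ∃ C : Set F, C.Nonempty ∧ C ≠ Set.univ ∧
      (∀ x ∈ C, ∀ y : F, y ≤ x → y ∈ C) ∧ (¬∃ l, IsLUB C l) ∧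
      (∀ ε : F, 0 < ε → ¬(Set.image (fun c => c + ε) C) ⊆ C) ∧ a ∈ C ∧ b ∉ C := by
  obtain ⟨_, ⟨c, hc, rfl⟩, hcb⟩ := not_subset.1 (hUreg (b - a) (sub_pos.2 hab))
  let e := OrderIso.addRight (c - a)
  have ha : a ∈ e ⁻¹' U := by simpa [e] using hc
  have hb : b ∉ e ⁻¹' U := by simpa [e, add_sub_left_comm] using hcb
  have hlower : IsLowerSet (e ⁻¹' U) :=
    IsLowerSet.preimage (fun _ _ hyx hx ↦ hUdc _ hx _ hyx) e.monotone
  refine ⟨e ⁻¹' U, ⟨a, ha⟩, (ne_univ_iff_exists_notMem _).2 ⟨b, hb⟩,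
    fun x hx y hyx ↦ hlower hyx hx, ?_, fun ε hε ↦ ?_, ha, hb⟩
  · rintro ⟨l, hl⟩
    exact hUgap ⟨e l, e.isLUB_preimage.1 hl⟩
  · exact (image_add_const_subset_self_preimage_add_const_iff U (c - a) ε).not.2 (hUreg ε hε)

/-- If an ordered field has a regular gap, then between any `a < b` there is a
regular gap `C` with `a ∈ C` and `b ∉ C`. -/
theorem regular_gap_translate (F : Type*) [Field F] [LinearOrder F] [IsStrictOrderedRing F]
    (U : Set F) (hUne : U.Nonempty) (hUproper : U ≠ Set.univ)
    (hUdc : ∀ x ∈ U, ∀ y : F, y ≤ x → y ∈ U)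
    (hUgap : ¬∃ l, IsLUB U l)
    (hUreg : ∀ ε : F, 0 < ε → ¬(Set.image (fun c => c + ε) U) ⊆ U)
    (a b : F) (hab : a < b) :
    ∃ C : Set F, C.Nonempty ∧ C ≠ Set.univ ∧
      (∀ x ∈ C, ∀ y : F, y ≤ x → y ∈ C) ∧ (¬∃ l, IsLUB C l) ∧
      (∀ ε : F, 0 < ε → ¬(Set.image (fun c => c + ε) C) ⊆ C) ∧ a ∈ C ∧ b ∉ C :=
  regular_gap_translate_general F U hUdc hUgap hUreg a b hab
end

section
/- For an ordered field F of a given cofinality κ: F is Scott complete (every function F → F that is Cauchy at infinity converges at infinity) if and only if F has no divergent Cauchy net of length κ. -/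
/-!
A function that is Cauchy at infinity is a Cauchy net indexed by `F`, so both sides say that
every Cauchy net along some index order converges: along `F`, resp. along `κ`. The two index
orders can be compared in both directions. Enumerating a cofinal subset of `F` of size `κ` and
bounding its initial segments (which have fewer than `κ` elements, hence are bounded) gives
`e : κ → F` tending to infinity and bounded on every initial segment; choosing for each `t` some
`α` with `t < e α` then gives `j : F → κ` tending to infinity too. Precomposing with `e` or `j`
preserves the Cauchy property, and a Cauchy net with a convergent subnet converges.
-/

open Cardinal Set Filter

section Nets

variable {F α β : Type*} [Field F] [LinearOrder F]

def CauchyAlong (l : Filter α) (x : α → F) : Prop :=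
  ∀ ε > 0, ∀ᶠ p in l ×ˢ l, |x p.1 - x p.2| < ε

def ConvergesAlong (l : Filter α) (x : α → F) : Prop :=
  ∃ L, ∀ ε > 0, ∀ᶠ a in l, |x a - L| < ε

variable {la : Filter α} {lb : Filter β} {x : α → F}

theorem CauchyAlong.comp_tendsto (hx : CauchyAlong la x) {j : β → α} (hj : Tendsto j lb la) :
    CauchyAlong lb (x ∘ j) :=
  fun ε hε => (hj.prodMap hj).eventually (hx ε hε)

theorem CauchyAlong.convergesAlong_of_comp [IsStrictOrderedRing F] [lb.NeBot]
    (hx : CauchyAlong la x) {j : β → α} (hj : Tendsto j lb la) (hxj : ConvergesAlong lb (x ∘ j)) :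
    ConvergesAlong la x := by
  obtain ⟨L, hL⟩ := hxj
  refine ⟨L, fun ε hε => ?_⟩
  filter_upwards [(hx (ε / 2) (half_pos hε)).curry] with a ha
  obtain ⟨b, hab, hbL⟩ := ((hj.eventually ha).and (hL (ε / 2) (half_pos hε))).exists
  calc |x a - L| ≤ |x a - x (j b)| + |x (j b) - L| := abs_sub_le _ _ _
    _ < ε / 2 + ε / 2 := add_lt_add hab hbL
    _ = ε := add_halves ε

theorem forall_convergesAlong_of_tendsto [IsStrictOrderedRing F] [lb.NeBot] {j : β → α}
    (hj : Tendsto j lb la) (h : ∀ y : β → F, CauchyAlong lb y → ConvergesAlong lb y)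
    (x : α → F) (hx : CauchyAlong la x) : ConvergesAlong la x :=
  hx.convergesAlong_of_comp hj (h _ (hx.comp_tendsto hj))

variable [Preorder α] [IsDirectedOrder α] [Nonempty α]

theorem cauchyAlong_atTop_iff : CauchyAlong atTop x ↔
    ∀ ε : F, 0 < ε → ∃ a, ∀ b c, a ≤ b → a ≤ c → |x b - x c| < ε := by
  simp only [CauchyAlong, prod_atTop_atTop_eq, eventually_atTop_prod_self]

theorem convergesAlong_atTop_iff : ConvergesAlong atTop x ↔
    ∃ L, ∀ ε : F, 0 < ε → ∃ a, ∀ b, a ≤ b → |x b - L| < ε := by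
  simp only [ConvergesAlong, eventually_atTop]

end Nets

section Cofinality

variable {F : Type*} [LinearOrder F]

theorem sInf_mk_not_bddAbove_eq_cof [NoMaxOrder F] :
    sInf {c : Cardinal | ∃ S : Set F, ¬BddAbove S ∧ #S = c} = Order.cof F := by
  simp_rw [not_bddAbove_iff_isCofinal]
  apply le_antisymm
  · obtain ⟨S, hS, hSc⟩ := Order.exists_cof_eq F
    exact hSc ▸ csInf_le' ⟨S, hS, rfl⟩
  · exact le_csInf ⟨_, univ, .univ, rfl⟩ fun _ ⟨S, hS, hSc⟩ => hSc ▸ Order.cof_le hS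

theorem BddAbove.of_mk_lt_cof {s : Set F} (hs : #s < Order.cof F) : BddAbove s :=
  .of_not_isCofinal fun h => hs.not_ge (Order.cof_le h)

theorem nonempty_toType_ord_cof [Nonempty F] : Nonempty (Order.cof F).ord.ToType := by
  rw [← mk_ne_zero_iff, mk_ord_toType]
  exact Order.cof_ne_zero

theorem exists_tendsto_atTop_of_toType_ord_cof :
    ∃ e : (Order.cof F).ord.ToType → F, Tendsto e atTop atTop ∧ ∀ α, BddAbove (e '' Iio α) := by
  obtain ⟨S, hS, hSc⟩ := Order.exists_cof_eq F
  obtain ⟨g⟩ : Nonempty ((Order.cof F).ord.ToType ≃ S) :=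
    Cardinal.eq.1 (by rw [mk_ord_toType, hSc])
  have hbdd (e : (Order.cof F).ord.ToType → F) (α) : BddAbove (e '' Iio α) :=
    .of_mk_lt_cof (mk_image_le.trans_lt (by simpa using mk_Iio_lt α))
  have hIic (α) : BddAbove ((fun β => (g β : F)) '' Iic α) := by
    rw [← Iio_insert, image_insert_eq]
    exact (hbdd _ α).insert _
  choose e he using hIic
  refine ⟨e, tendsto_atTop.2 fun t => ?_, hbdd e⟩
  obtain ⟨y, hy, hty⟩ := hS t
  filter_upwards [eventually_ge_atTop (g.symm ⟨y, hy⟩)] with α hα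
  exact hty.trans (he α ⟨_, hα, by simp⟩)

end Cofinality

theorem exists_tendsto_atTop_of_bddAbove_image_Iio {ι F : Type*} [LinearOrder ι] [Nonempty ι]
    [LinearOrder F] [Nonempty F] [NoMaxOrder F] {e : ι → F} (he : Tendsto e atTop atTop)
    (hb : ∀ α, BddAbove (e '' Iio α)) : ∃ j : F → ι, Tendsto j atTop atTop := by
  choose j hj using fun t => (he.eventually_gt_atTop t).exists
  refine ⟨j, tendsto_atTop_atTop.2 fun α => ?_⟩
  obtain ⟨d, hd⟩ := hb α
  exact ⟨d, fun t hdt => not_lt.1 fun hjt => (hj t).not_ge ((hd ⟨_, hjt, rfl⟩).trans hdt)⟩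

/-- An ordered field of cofinality `κ` is Scott complete (every function `F → F`
Cauchy at infinity converges at infinity) iff it has no divergent Cauchy net of
length `κ`. -/
theorem scott_complete_iff_no_divergent_cauchy_net (F : Type*) [Field F] [LinearOrder F] [IsStrictOrderedRing F]
    (κ : Cardinal)
    (hκ : κ = sInf {c : Cardinal | ∃ S : Set F, ¬BddAbove S ∧ Cardinal.mk S = c}) :
    ((∀ f : F → F,
        (∀ ε : F, 0 < ε → ∃ d : F, ∀ x y : F, d ≤ x → d ≤ y → |f x - f y| < ε) →
        ∃ L : F, ∀ ε : F, 0 < ε → ∃ d : F, ∀ x : F, d ≤ x → |f x - L| < ε) ↔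
      ¬∃ x : κ.ord.ToType → F,
        (∀ ε : F, 0 < ε → ∃ α₀ : κ.ord.ToType,
          ∀ α β : κ.ord.ToType, α₀ ≤ α → α₀ ≤ β → |x α - x β| < ε) ∧
        ¬∃ L : F, ∀ ε : F, 0 < ε → ∃ α₀ : κ.ord.ToType,
          ∀ α : κ.ord.ToType, α₀ ≤ α → |x α - L| < ε) := by
  obtain rfl : κ = Order.cof F := hκ.trans sInf_mk_not_bddAbove_eq_cof
  have := nonempty_toType_ord_cof (F := F)
  obtain ⟨e, he, hbdd⟩ := exists_tendsto_atTop_of_toType_ord_cof (F := F)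
  obtain ⟨j, hj⟩ := exists_tendsto_atTop_of_bddAbove_image_Iio he hbdd
  simp only [← cauchyAlong_atTop_iff, ← convergesAlong_atTop_iff, not_exists, not_and, not_not]
  exact ⟨forall_convergesAlong_of_tendsto hj, forall_convergesAlong_of_tendsto he⟩
end

section
/- If f : F → F is a Cauchy-at-infinity function on an ordered field F, then the set C = {z ∈ F : for all t there exists x ≥ t with z ≤ f(x)} is a downward-closed set, and C is regular in the sense that for every ε > 0 in F, C + ε is not contained in C. -/
/-!
If `f` is Cauchy at infinity, pick `d` with `|f x - f d| < ε / 2` for all `x ≥ d`. Then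
`f d - ε / 2` lies below `f x` for all large `x`, so it is in `C`, while `f d + ε / 2` lies
above `f x` for all large `x`, so it is not; hence `C + ε ⊄ C`.
-/

/-- The set `C` of values that `f` reaches or exceeds arbitrarily far out. -/
def limsupCut {α β : Type*} [Preorder α] [Preorder β] (f : α → β) : Set β :=
  {z | ∀ t, ∃ x, t ≤ x ∧ z ≤ f x}

section

variable {α β : Type*}

theorem isLowerSet_limsupCut [Preorder α] [Preorder β] (f : α → β) :
    IsLowerSet (limsupCut f) := by
  intro z w hwz hz t
  obtain ⟨x, htx, hzx⟩ := hz t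
  exact ⟨x, htx, hwz.trans hzx⟩

variable [AddCommGroup β] [LinearOrder β] [IsOrderedAddMonoid β] {f : α → β} {d : α} {δ : β}

theorem sub_mem_limsupCut [SemilatticeSup α] (hd : ∀ x, d ≤ x → |f x - f d| < δ) :
    f d - δ ∈ limsupCut f := by
  intro t
  refine ⟨t ⊔ d, le_sup_left, ?_⟩
  exact (sub_lt_comm.mp (abs_sub_lt_iff.mp (hd (t ⊔ d) le_sup_right)).2).le

theorem add_notMem_limsupCut [Preorder α] (hd : ∀ x, d ≤ x → |f x - f d| < δ) :
    f d + δ ∉ limsupCut f := by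
  intro hmem
  obtain ⟨x, hdx, hle⟩ := hmem d
  exact hle.not_gt (sub_lt_iff_lt_add'.mp (abs_sub_lt_iff.mp (hd x hdx)).1)

end

/-- For a function `f` Cauchy at infinity on an ordered field, the set
`C = {z : ∀ t, ∃ x ≥ t, z ≤ f x}` is downward closed and regular. -/
theorem cauchy_at_infinity_regular_cut (F : Type*) [Field F] [LinearOrder F] [IsStrictOrderedRing F]
    (f : F → F)
    (hf : ∀ ε : F, 0 < ε → ∃ d : F, ∀ x y : F, d ≤ x → d ≤ y → |f x - f y| < ε) :
    (∀ z ∈ {z : F | ∀ t : F, ∃ x : F, t ≤ x ∧ z ≤ f x}, ∀ w : F, w ≤ z →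
      w ∈ {z : F | ∀ t : F, ∃ x : F, t ≤ x ∧ z ≤ f x}) ∧
    (∀ ε : F, 0 < ε →
      ¬(Set.image (fun c => c + ε) {z : F | ∀ t : F, ∃ x : F, t ≤ x ∧ z ≤ f x}) ⊆
        {z : F | ∀ t : F, ∃ x : F, t ≤ x ∧ z ≤ f x}) := by
  refine ⟨fun z hz w hwz => isLowerSet_limsupCut f hwz hz, fun ε hε hsub => ?_⟩
  obtain ⟨d, hd⟩ := hf (ε / 2) (half_pos hε)
  have hd' : ∀ x, d ≤ x → |f x - f d| < ε / 2 := fun x hx => hd x d hx le_rfl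
  have hshift : f d - ε / 2 + ε ∈ limsupCut f := hsub ⟨_, sub_mem_limsupCut hd', rfl⟩
  rw [sub_add_eq_add_sub, add_sub_assoc, sub_half] at hshift
  exact add_notMem_limsupCut hd' hshift
end

section
/- If f : F → F is Cauchy at infinity and the set C = {z ∈ F : for all t there exists x ≥ t with z ≤ f(x)} has a supremum α in F, then f converges to α at infinity: for every ε > 0 there is d ∈ F such that |f(x) − α| ≤ ε for all x ≥ d. -/
/-!
Past the Cauchy threshold `d` for `ε / 2`, each value `f x` pins down the cut:
`f x - ε / 2` lies in it, because `f` is within `ε / 2` of `f x` on all of `[d, ∞)`, while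
`f x + ε / 2` bounds it, because every element of the cut is below some `f y` with `y ≥ d`.
Hence the supremum lies within `ε / 2` of `f x`.
-/

section

variable {ι F : Type*} [LinearOrder ι] [AddCommGroup F] [LinearOrder F] [IsOrderedAddMonoid F]

/-- The set `C` of the statement. -/
def frequentlyBelow (f : ι → F) : Set F :=
  {z | ∀ t, ∃ x, t ≤ x ∧ z ≤ f x}

variable {f : ι → F} {x d : ι} {δ : F}

theorem sub_mem_frequentlyBelow (hd : ∀ y, d ≤ y → |f x - f y| < δ) :
    f x - δ ∈ frequentlyBelow f := fun t =>
  ⟨max t d, le_max_left t d, (sub_lt_comm.mp (abs_sub_lt_iff.mp (hd _ (le_max_right t d))).1).le⟩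

theorem add_mem_upperBounds_frequentlyBelow (hd : ∀ y, d ≤ y → |f x - f y| < δ) :
    f x + δ ∈ upperBounds (frequentlyBelow f) := by
  intro z hz
  obtain ⟨y, hdy, hzy⟩ := hz d
  exact hzy.trans (sub_lt_iff_lt_add'.mp (abs_sub_lt_iff.mp (hd y hdy)).2).le

end

/-- If `f` is Cauchy at infinity and the cut `C = {z : ∀ t, ∃ x ≥ t, z ≤ f x}`
has a supremum `α`, then `f` converges to `α` at infinity. -/
theorem cauchy_at_infinity_tendsto_sup (F : Type*) [Field F] [LinearOrder F] [IsStrictOrderedRing F]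
    (f : F → F)
    (hf : ∀ ε : F, 0 < ε → ∃ d : F, ∀ x y : F, d ≤ x → d ≤ y → |f x - f y| < ε)
    (α : F) (hα : IsLUB {z : F | ∀ t : F, ∃ x : F, t ≤ x ∧ z ≤ f x} α) :
    ∀ ε : F, 0 < ε → ∃ d : F, ∀ x : F, d ≤ x → |f x - α| ≤ ε := by
  intro ε hε
  obtain ⟨d, hd⟩ := hf (ε / 2) (half_pos hε)
  refine ⟨d, fun x hx => ?_⟩
  have hclose : ∀ y, d ≤ y → |f x - f y| < ε / 2 := fun y hy => hd x y hx hy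
  have hlower : f x - ε / 2 ≤ α := hα.1 (sub_mem_frequentlyBelow hclose)
  have hupper : α ≤ f x + ε / 2 := hα.2 (add_mem_upperBounds_frequentlyBelow hclose)
  rw [abs_le]
  constructor <;> linarith
end

section
/- The fraction field of the ring of generalized power series with real coefficients and nonpositive rational exponents is dense in the field of generalized power series with real coefficients and rational exponents. -/
/-!
Order `[[ℝ^ℚ]]` lexicographically: `x < y` means that `x` and `y` agree below some exponent `i`
and `x_i < y_i`. Truncating `x` below `i` and adding `m t^i` for a real `m` strictly between
`x_i` and `y_i` gives a series strictly between `x` and `y` whose support is bounded above.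
A series `w` with support bounded above by `s ≥ 0` is the quotient of `w t^{-s}` and `t^{-s}`,
both supported in `ℚ^{≤0}`.
-/

/-- The field `[[ℝ^ℚ]]` of Hahn series is linearly ordered by comparing the
leading coefficient (the coefficient at the minimum of the support) of the
difference: `x < y` iff the leading coefficient of `y - x` is positive. -/
def HahnSeries.Lt (x y : HahnSeries ℚ ℝ) : Prop :=
  0 < (y - x).leadingCoeff

namespace HahnSeries

theorem exists_bddAbove_support_lex_between {Γ R : Type*} [LinearOrder Γ] [AddMonoid R]
    [LinearOrder R] [DenselyOrdered R] {x y : R⟦Γ⟧} (hxy : toLex x < toLex y) :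
    ∃ w : R⟦Γ⟧, BddAbove w.support ∧ toLex x < toLex w ∧ toLex w < toLex y := by
  obtain ⟨i, hagree, hi⟩ := (lt_iff _ _).1 hxy
  obtain ⟨m, hxm, hmy⟩ := exists_between hi
  refine ⟨truncLT i x + single i m, ⟨i, fun j hj => ?_⟩,
    (lt_iff _ _).2 ⟨i, fun j hj => ?_, ?_⟩, (lt_iff _ _).2 ⟨i, fun j hj => ?_, ?_⟩⟩
  · by_contra! hij
    simp [coeff_truncLT_of_le hij.le, coeff_single_of_ne hij.ne'] at hj
  · simp [coeff_truncLT_of_lt hj, coeff_single_of_ne hj.ne]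
  · simpa using hxm
  · simpa [coeff_truncLT_of_lt hj, coeff_single_of_ne hj.ne] using hagree j hj
  · simpa using hmy

theorem exists_div_eq_of_bddAbove_support {Γ R : Type*} [AddCommGroup Γ] [LinearOrder Γ]
    [IsOrderedAddMonoid Γ] [Field R] {w : R⟦Γ⟧} (hw : BddAbove w.support) :
    ∃ a b : R⟦Γ⟧, a.support ⊆ Set.Iic 0 ∧ b.support ⊆ Set.Iic 0 ∧ b ≠ 0 ∧ a / b = w := by
  obtain ⟨s, hs⟩ := hw
  have hb : single (-max s 0) (1 : R) ≠ 0 := single_ne_zero one_ne_zero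
  refine ⟨w * single (-max s 0) 1, single (-max s 0) 1, fun p hp => ?_,
    support_single_subset.trans (by simp), hb, mul_div_cancel_right₀ w hb⟩
  have hps : p + max s 0 ≤ s := hs (by simpa [coeff_mul_single] using hp)
  exact add_le_iff_nonpos_left.1 (hps.trans (le_max_left s 0))

theorem lt_iff_toLex_lt (x y : HahnSeries ℚ ℝ) : x.Lt y ↔ toLex x < toLex y := by
  rw [HahnSeries.Lt, ← sub_pos (b := toLex x), ← toLex_sub]
  exact leadingCoeff_pos_iff

end HahnSeries

/-- The fraction field of `R = [[ℝ^{ℚ^{≤0}}]]` (Hahn series with support in the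
nonpositive rationals) is dense in `[[ℝ^ℚ]]`: strictly between any two elements
of `[[ℝ^ℚ]]` lies a quotient of two elements of `R`. -/
theorem fractionField_dense_in_hahnSeries
    (x y : HahnSeries ℚ ℝ) (hxy : HahnSeries.Lt x y) :
    ∃ a b : HahnSeries ℚ ℝ,
      a.support ⊆ Set.Iic 0 ∧ b.support ⊆ Set.Iic 0 ∧ b ≠ 0 ∧
      HahnSeries.Lt x (a / b) ∧ HahnSeries.Lt (a / b) y := by
  obtain ⟨w, hw, hxw, hwy⟩ :=
    HahnSeries.exists_bddAbove_support_lex_between ((HahnSeries.lt_iff_toLex_lt x y).1 hxy)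
  obtain ⟨a, b, ha, hb, hb0, rfl⟩ := HahnSeries.exists_div_eq_of_bddAbove_support hw
  exact ⟨a, b, ha, hb, hb0, (HahnSeries.lt_iff_toLex_lt _ _).2 hxw,
    (HahnSeries.lt_iff_toLex_lt _ _).2 hwy⟩
end

section
/- The map on a Hahn series field [[F^G]] induced by doubling exponents (sending the characteristic function of {g} to that of {2g}) is an ordered field automorphism when G is 2-divisible, and its fixed points are exactly the elements of F (constant series supported at 0). -/
/-- The Hahn series field `[[F^G]]` is ordered by positivity of the leading
coefficient (the coefficient at the minimum of the support) of the
difference. -/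
def HahnSeries.Lt' {G : Type*} [AddCommGroup G] [LinearOrder G] [IsOrderedAddMonoid G]
    {F : Type*} [Field F] [LinearOrder F] [IsStrictOrderedRing F] (x y : HahnSeries G F) : Prop :=
  0 < (y - x).leadingCoeff

/-!
Doubling `g ↦ g + g` is an ordered additive automorphism `e` of `G`, so transporting exponents
along it (`HahnSeries.embDomain`) is a ring automorphism of `[[F^G]]`. It sends the leading term
of a series to the leading term of the image, hence preserves leading coefficients and with them
the order.

A series fixed by the automorphism has a well-founded support `s` with `e ⁻¹' s = s`. If some
`a ∈ s` had `e a < a`, then `a > e a > e (e a) > ⋯` would descend in `s`; applying the same to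
`e⁻¹` shows `e a = a` on `s`, and `0` is the only fixed point of doubling.
-/

theorem Set.IsWF.not_apply_lt_self_of_mapsTo {α : Type*} [Preorder α] {s : Set α}
    (hs : s.IsWF) (e : α ≃o α) (hes : Set.MapsTo e s s) {a : α} (ha : a ∈ s) : ¬ e a < a :=
  hs.induction (P := fun b => ¬ e b < b) ha fun b hb ih hlt =>
    ih (e b) (hes hb) hlt (e.lt_iff_lt.mpr hlt)

theorem Set.IsWF.apply_eq_self_of_preimage_eq {α : Type*} [LinearOrder α] {s : Set α}
    (hs : s.IsWF) (e : α ≃o α) (hes : e ⁻¹' s = s) {a : α} (ha : a ∈ s) : e a = a := by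
  have hmaps : Set.MapsTo e s s := fun b hb => by rwa [← hes] at hb
  have hmaps_symm : Set.MapsTo e.symm s s := fun b hb => by
    rw [← hes, Set.mem_preimage, e.apply_symm_apply]
    exact hb
  apply le_antisymm
  · refine not_lt.mp fun hlt => hs.not_apply_lt_self_of_mapsTo e.symm hmaps_symm (hmaps ha) ?_
    rwa [e.symm_apply_apply]
  · exact not_lt.mp (hs.not_apply_lt_self_of_mapsTo e hmaps ha)

namespace HahnSeries

variable {Γ Γ' R : Type*}

section Domain

variable [Zero R]

theorem embDomain_symm_embDomain [PartialOrder Γ] [PartialOrder Γ'] (e : Γ ≃o Γ')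
    (x : HahnSeries Γ R) :
    embDomain e.symm.toOrderEmbedding (embDomain e.toOrderEmbedding x) = x := by
  ext a
  simpa using (embDomain_coeff (f := e.symm.toOrderEmbedding) (a := e a)).trans
    (embDomain_coeff (f := e.toOrderEmbedding) (x := x))

theorem leadingCoeff_embDomain [LinearOrder Γ] [LinearOrder Γ'] (f : Γ ↪o Γ')
    (x : HahnSeries Γ R) : (embDomain f x).leadingCoeff = x.leadingCoeff := by
  rcases eq_or_ne x 0 with rfl | hx
  · simp
  obtain ⟨g, hg⟩ := WithTop.ne_top_iff_exists.mp (orderTop_ne_top.mpr hx)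
  simp [leadingCoeff, orderTop_embDomain, ← hg]

theorem embDomain_eq_self_iff [LinearOrder Γ] (e : Γ ≃o Γ) (x : HahnSeries Γ R) :
    embDomain e.toOrderEmbedding x = x ↔ ∀ g ∈ x.support, e g = g := by
  have coeff_apply (g : Γ) : (embDomain e.toOrderEmbedding x).coeff (e g) = x.coeff g :=
    embDomain_coeff
  constructor
  · intro hx g hg
    refine x.isWF_support.apply_eq_self_of_preimage_eq e (Set.ext fun a => ?_) hg
    rw [Set.mem_preimage, mem_support, mem_support, ← coeff_apply a, hx]
  · intro hfix
    ext b
    obtain ⟨a, rfl⟩ := e.surjective b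
    rw [coeff_apply]
    by_cases ha : a ∈ x.support
    · rw [hfix a ha]
    · have hea : e a ∉ x.support := fun hea => ha (e.injective (hfix (e a) hea) ▸ hea)
      rw [mem_support, not_not] at ha hea
      rw [ha, hea]

end Domain

section Ring

variable [AddCommMonoid Γ] [PartialOrder Γ] [IsOrderedCancelAddMonoid Γ]
  [AddCommMonoid Γ'] [PartialOrder Γ'] [IsOrderedCancelAddMonoid Γ'] [NonUnitalNonAssocSemiring R]

noncomputable def embDomainRingEquiv (e : Γ ≃+o Γ') : HahnSeries Γ R ≃+* HahnSeries Γ' R where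
  toFun := embDomain e.toOrderIso.toOrderEmbedding
  invFun := embDomain e.symm.toOrderIso.toOrderEmbedding
  left_inv := embDomain_symm_embDomain e.toOrderIso
  right_inv := embDomain_symm_embDomain e.toOrderIso.symm
  map_mul' := embDomain_mul _ (map_add e)
  map_add' := embDomain_add _

theorem embDomainRingEquiv_apply (e : Γ ≃+o Γ') (x : HahnSeries Γ R) :
    embDomainRingEquiv e x = embDomain e.toOrderIso.toOrderEmbedding x := rfl

end Ring

end HahnSeries

noncomputable def doubleOrderAddIso {G : Type*} [AddCommMonoid G] [LinearOrder G]
    [IsOrderedCancelAddMonoid G] (hdiv : ∀ g : G, ∃ h : G, h + h = g) : G ≃+o G where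
  __ := (strictMono_id.add strictMono_id).orderIsoOfSurjective (fun a : G => a + a) hdiv
  map_add' a b := add_add_add_comm a b a b
  map_le_map_iff' := (strictMono_id.add strictMono_id).le_iff_le

/-- For a 2-divisible linearly ordered abelian group `G` and a linearly
ordered field `F`, the map on `[[F^G]]` induced by doubling exponents
(`(A f).coeff (g + g) = f.coeff g`) is an ordered field automorphism, and its
fixed points are exactly the series supported at `0`, i.e. the elements of
`F`. -/
theorem doubling_automorphism (G : Type*) [AddCommGroup G] [LinearOrder G] [IsOrderedAddMonoid G]
    (hdiv : ∀ g : G, ∃ h : G, h + h = g)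
    (F : Type*) [Field F] [LinearOrder F] [IsStrictOrderedRing F] :
    ∃ A : HahnSeries G F ≃+* HahnSeries G F,
      (∀ (f : HahnSeries G F) (g : G), (A f).coeff (g + g) = f.coeff g) ∧
      (∀ x y : HahnSeries G F, HahnSeries.Lt' x y ↔ HahnSeries.Lt' (A x) (A y)) ∧
      (∀ f : HahnSeries G F, A f = f ↔ f.support ⊆ {0}) := by
  refine ⟨HahnSeries.embDomainRingEquiv (doubleOrderAddIso hdiv),
    fun f g => HahnSeries.embDomain_coeff, fun x y => ?_, fun f => ?_⟩
  · rw [HahnSeries.Lt', HahnSeries.Lt', ← map_sub, HahnSeries.embDomainRingEquiv_apply,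
      HahnSeries.leadingCoeff_embDomain]
  · rw [HahnSeries.embDomainRingEquiv_apply, HahnSeries.embDomain_eq_self_iff]
    exact forall₂_congr fun g _ => add_eq_left
end

section
/- Every uncountable ordered field contains a transcendence basis over ℚ that is dense in the field. -/
/-! Enumerate the open intervals of `F` along the initial ordinal of `#F` and, by transfinite
recursion, pick in the `i`-th interval an element transcendental over the algebra generated by the
earlier picks. This is possible because fewer than `#F` elements are algebraic over that algebra,
while every interval has `#F` elements. Each pick is transcendental over its predecessors, so the
picks are algebraically independent, and any transcendence basis containing them is dense. -/

open Cardinal Set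

universe u v

theorem Cardinal.mk_Ioo_eq_mk {F : Type*} [Field F] [LinearOrder F] [IsStrictOrderedRing F]
    {x y : F} (h : x < y) : #(Ioo x y) = #F := by
  have ha : 0 < (y - x) / 2 := by linarith
  have hIoo : Ioo x y = ((y - x) / 2 * · + (x + y) / 2) '' Ioo (-1) 1 := by
    rw [image_affine_Ioo ha]
    congr 1 <;> ring
  have hinj : Function.Injective ((y - x) / 2 * · + (x + y) / 2) :=
    (add_left_injective _).comp (mul_right_injective₀ ha.ne')
  rw [hIoo, mk_image_eq hinj, mk_congr (orderIsoIooNegOneOne F).toEquiv]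

theorem Cardinal.mk_subtype_fst_lt_snd {α : Type*} [LinearOrder α] [NoMaxOrder α] [Infinite α] :
    #{p : α × α // p.1 < p.2} = #α := by
  choose g hg using fun a : α ↦ exists_gt a
  refine le_antisymm ?_ (mk_le_of_injective (f := fun a ↦ ⟨(a, g a), hg a⟩) ?_)
  · calc #{p : α × α // p.1 < p.2} ≤ #(α × α) := mk_subtype_le _
      _ = #α := by rw [mk_prod, lift_id, mul_eq_self (aleph0_le_mk α)]
  · intro a b hab
    exact congrArg (fun p : {p : α × α // p.1 < p.2} ↦ p.1.1) hab

theorem Cardinal.mk_setOf_isAlgebraic_adjoin_le {R : Type u} {L : Type v} [CommRing R]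
    [Countable R] [CommRing L] [IsDomain L] [Algebra R L] (s : Set L) :
    #{x : L | IsAlgebraic (Algebra.adjoin R s) x} ≤ max #s ℵ₀ := by
  set A := Algebra.adjoin R s
  have hA : #A ≤ max #s ℵ₀ := by
    have hR : lift #R ≤ ℵ₀ := lift_le_aleph0.2 mk_le_aleph0
    rw [← lift_le.{u}, lift_max, lift_aleph0]
    exact (Algebra.lift_cardinalMk_adjoin_le R s).trans
      (max_le (max_le (hR.trans (le_max_right _ _)) (le_max_left _ _)) (le_max_right _ _))
  calc #{x : L | IsAlgebraic A x} = #(Subalgebra.algebraicClosure A L) := rfl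
    _ ≤ max #A ℵ₀ := Algebra.IsAlgebraic.cardinalMk_le_max A _
    _ ≤ max #s ℵ₀ := max_le hA (le_max_right _ _)

theorem exists_mem_transcendental_adjoin_of_mk_lt {R L : Type*} [CommRing R] [Countable R]
    [CommRing L] [IsDomain L] [Algebra R L] {s t : Set L} (h : max #s ℵ₀ < #t) :
    ∃ a ∈ t, Transcendental (Algebra.adjoin R s) a := by
  by_contra! ht
  refine (mk_setOf_isAlgebraic_adjoin_le (R := R) s).not_gt (h.trans_le (mk_le_mk_of_subset ?_))
  exact fun a ha ↦ not_not.1 (ht a ha)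

theorem WellFoundedLT.exists_forall_image_Iio {ι α : Type*} [Preorder ι] [WellFoundedLT ι]
    (p : ι → Set α → α → Prop) (h : ∀ i (g : Iio i → α), ∃ a, p i (range g) a) :
    ∃ f : ι → α, ∀ i, p i (f '' Iio i) (f i) := by
  choose c hc using h
  let f : ι → α := WellFoundedLT.fix fun i IH ↦ c i fun j ↦ IH j j.2
  refine ⟨f, fun i ↦ ?_⟩
  rw [image_eq_range, show f i = c i fun j ↦ f j from WellFoundedLT.fix_eq _ i]
  exact hc i _

theorem algebraicIndependent_of_transcendental_adjoin_image_Iio {ι R A : Type*} [LinearOrder ι]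
    [CommRing R] [CommRing A] [Algebra R A] (hR : Function.Injective (algebraMap R A))
    {x : ι → A} (h : ∀ i, Transcendental (Algebra.adjoin R (x '' Iio i)) (x i)) :
    AlgebraicIndependent R x := by
  classical
  refine algebraicIndependent_of_finite_type fun t ht ↦ ?_
  rw [← ht.coe_toFinset]
  induction ht.toFinset using Finset.induction_on_max with
  | empty =>
    rw [Finset.coe_empty]
    exact algebraicIndependent_empty_type_iff.2 hR
  | insert i s hlt hs =>
    rw [Finset.coe_insert]
    exact AlgebraicIndepOn.insert hs <| (h i).of_tower_top_of_subalgebra_le <|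
      Algebra.adjoin_mono <| image_mono fun j hj ↦ hlt j hj

/-- Every uncountable linearly ordered field has a transcendence basis over `ℚ`
which is dense in the field. -/
theorem uncountable_field_dense_transcendence_basis (F : Type*)
    [Field F] [LinearOrder F] [IsStrictOrderedRing F] (hF : Cardinal.aleph0 < Cardinal.mk F) :
    ∃ S : Set F, IsTranscendenceBasis ℚ ((↑) : S → F) ∧
      ∀ x y : F, x < y → ∃ s ∈ S, x < s ∧ s < y := by
  have : Infinite F := infinite_iff.2 hF.le
  let ι := (#F).ord.ToType
  obtain ⟨e⟩ : Nonempty (ι ≃ {p : F × F // p.1 < p.2}) := by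
    rw [← Cardinal.eq, mk_ord_toType, mk_subtype_fst_lt_snd]
  have hIio (i : ι) : #(Iio i) < #F :=
    (mk_Iio_lt i (by rw [mk_ord_toType, Ordinal.type_toType])).trans_eq (mk_ord_toType _)
  obtain ⟨f, hf⟩ := WellFoundedLT.exists_forall_image_Iio
    (fun i s a ↦ a ∈ Ioo (e i).1.1 (e i).1.2 ∧ Transcendental (Algebra.adjoin ℚ s) a)
    fun i g ↦ exists_mem_transcendental_adjoin_of_mk_lt <| by
      rw [mk_Ioo_eq_mk (e i).2]
      exact max_lt (mk_range_le.trans_lt (hIio i)) hF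
  have hind := algebraicIndependent_of_transcendental_adjoin_image_Iio
    (algebraMap ℚ F).injective fun i ↦ (hf i).2
  obtain ⟨S, hfS, hS⟩ := exists_isTranscendenceBasis_superset hind.to_subtype_range
  refine ⟨S, hS, fun x y hxy ↦ ?_⟩
  have hmem := (hf (e.symm ⟨(x, y), hxy⟩)).1
  rw [e.apply_symm_apply] at hmem
  exact ⟨_, hfS (mem_range_self _), hmem⟩
end
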